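/- Let g(m) = 2^{-1/2}·max(0, c2·log(d)/(-m^2+2m-d) - c2·log(d)/(1-d) + c1·m·L - c1·log(1+β)) where L = log((1+β)/(1-α)), and let J(m,n) = c1·log(n) + c2·log(d)/(-m^2+2m-d). Then for all m ∈ [0,1], n > 0: g(m)^2 - (1/2)·max(0, J(m,n) - m·(c1·log(n(1-α)) + c2·log(d)/(1-d)) - (1-m)·(c1·log(n(1+β)) + c2·log(d)/(1-d)))^2 = 0. -/
import Mathlib


theorem hjb_cancellation (c1 c2 d α β : ℝ)
    (hd : 0 < d) (hd1 : d ≠ 1)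
    (hα0 : 0 < α) (hα1 : α < 1) (hβ : 0 < β)
    (hdenom : ∀ m ∈ Set.Icc (0 : ℝ) 1, -m ^ 2 + 2 * m - d ≠ 0) :
    ∀ m ∈ Set.Icc (0 : ℝ) 1, ∀ n : ℝ, 0 < n →
      ((2 : ℝ) ^ (-(1 : ℝ) / 2) *
          max 0 (c2 * Real.log d / (-m ^ 2 + 2 * m - d) - c2 * Real.log d / (1 - d)
            + c1 * m * Real.log ((1 + β) / (1 - α)) - c1 * Real.log (1 + β))) ^ 2
        - (1 / 2) *
          (max 0 ((c1 * Real.log n + c2 * Real.log d / (-m ^ 2 + 2 * m - d))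
            - m * (c1 * Real.log (n * (1 - α)) + c2 * Real.log d / (1 - d))
            - (1 - m) * (c1 * Real.log (n * (1 + β)) + c2 * Real.log d / (1 - d)))) ^ 2
      = 0 := by
  intro m hm n hn
  have hα' : (1 : ℝ) - α ≠ 0 := by linarith
  have hβ' : (1 : ℝ) + β ≠ 0 := by linarith
  have hn' : n ≠ 0 := ne_of_gt hn
  have hargs :
      (c1 * Real.log n + c2 * Real.log d / (-m ^ 2 + 2 * m - d))
            - m * (c1 * Real.log (n * (1 - α)) + c2 * Real.log d / (1 - d))
            - (1 - m) * (c1 * Real.log (n * (1 + β)) + c2 * Real.log d / (1 - d))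
      = c2 * Real.log d / (-m ^ 2 + 2 * m - d) - c2 * Real.log d / (1 - d)
            + c1 * m * Real.log ((1 + β) / (1 - α)) - c1 * Real.log (1 + β) := by
    rw [Real.log_mul hn' hα', Real.log_mul hn' hβ', Real.log_div hβ' hα']
    ring
  rw [hargs]
  have h2 : ((2 : ℝ) ^ (-(1 : ℝ) / 2)) ^ 2 = 1 / 2 := by
    rw [← Real.rpow_natCast ((2 : ℝ) ^ (-(1 : ℝ) / 2)) 2,
      ← Real.rpow_mul (by norm_num : (0:ℝ) ≤ 2)]
    norm_num
  rw [mul_pow, h2]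
  ring
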